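/- For every n ≥ 1, the map sending a permutation ρ of {1,…,n} to its 321-height vector (h_1,…,h_n) is a bijection from the set of (3,2,1)-avoiding permutations of {1,…,n} onto the set H_n of sequences (h_1,…,h_n) of nonnegative integers with h_n = 0 and h_i ≤ h_{i+1} + 1 for all 1 ≤ i ≤ n−1. -/

import Mathlib

open scoped Classical

/-- An entry `ρ i` is a left-to-right maximum if it is greater than all entries to its left. -/
def IsLRMax {n : ℕ} (ρ : Equiv.Perm (Fin n)) (i : Fin n) : Prop :=
  ∀ j, j < i → ρ j < ρ i

/-- `m` is the last left-to-right maximum of `ρ` strictly before position `i`. -/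
def IsLastLRMaxBefore {n : ℕ} (ρ : Equiv.Perm (Fin n)) (m i : Fin n) : Prop :=
  m < i ∧ IsLRMax ρ m ∧ ∀ p, m < p → p < i → ¬ IsLRMax ρ p

/-- The 321-height of entry `i` of `ρ`:  if `ρ i` is a left-to-right maximum, the number of
entries to the right of `i` that are smaller than `ρ i`; otherwise the number of entries
`ρ k` to the right of `i` with `ρ i < ρ k < ρ m`, where `ρ m` is the last left-to-right
maximum before position `i`. -/
noncomputable def height321 {n : ℕ} (ρ : Equiv.Perm (Fin n)) (i : Fin n) : ℕ :=
  if IsLRMax ρ i then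
    (Finset.univ.filter (fun k => i < k ∧ ρ k < ρ i)).card
  else
    (Finset.univ.filter (fun k => i < k ∧ ρ i < ρ k ∧
      ∃ m, IsLastLRMaxBefore ρ m i ∧ ρ k < ρ m)).card

/-!
Positions and values are `0`-indexed below. In a 321-avoiding permutation `ρ` the entries that are
not left-to-right maxima increase, and the heights see the left-to-right maxima: `j` is one iff
`h (j - 1) ≤ h j`, and then `ρ j = j + h j`. The remaining entries are forced to be the leftover
values in increasing order, so `ρ` is determined by `h`. Conversely, for `h ∈ H_n` this recipe
yields a union of two increasing subsequences, hence a 321-avoiding permutation; a counting argument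
shows that its left-to-right maxima are exactly the weak ascents of `h`, and then the step relation
`h (j - 1) = h j + 1` at the other positions forces its height vector to be `h`.
-/

open Finset

def Avoids321 {α β : Type*} [LT α] [LT β] (f : α → β) : Prop :=
  ∀ a b c : α, a < b → b < c → ¬(f c < f b ∧ f b < f a)

section General

variable {α β : Type*} [LinearOrder α]

theorem avoids321_of_strictMonoOn_compl [Preorder β] {f : α → β} {s : Set α}
    (h₁ : StrictMonoOn f s) (h₂ : StrictMonoOn f sᶜ) : Avoids321 f := by
  have key : ∀ x y, x < y → f y < f x → (x ∈ s ↔ y ∉ s) := fun x y hxy hyx =>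
    ⟨fun hx hy => lt_asymm (h₁ hx hy hxy) hyx,
     fun hy => by_contra fun hx => lt_asymm (h₂ hx hy hxy) hyx⟩
  rintro a b c hab hbc ⟨hcb, hba⟩
  have := key a b hab hba
  have := key b c hbc hcb
  have := key a c (hab.trans hbc) (hcb.trans hba)
  tauto

theorem StrictMonoOn.lt_iff_card_filter_lt [LinearOrder β] {f : α → β} {t : Finset α}
    (hf : StrictMonoOn f t) {i : α} (hi : i ∈ t) (x : β) :
    f i < x ↔ #{k ∈ t | k < i} < #{k ∈ t | f k < x} := by
  constructor
  · intro hix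
    refine card_lt_card ((ssubset_iff_of_subset fun k hk => ?_).2 ⟨i, ?_, ?_⟩)
    · simp only [mem_filter] at hk ⊢
      exact ⟨hk.1, (hf hk.1 hi hk.2).trans hix⟩
    · simp [hi, hix]
    · simp
  · intro hcard
    by_contra! hxi
    refine hcard.not_ge (card_le_card fun k hk => ?_)
    simp only [mem_filter] at hk ⊢
    exact ⟨hk.1, (hf.lt_iff_lt hk.1 hi).1 (hk.2.trans_le hxi)⟩

theorem card_filter_add_card_compl_filter [Fintype α] (s : Finset α) (P : α → Prop)
    [DecidablePred P] : #{k ∈ s | P k} + #{k ∈ sᶜ | P k} = #{k | P k} := by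
  rw [← card_union_of_disjoint (disjoint_filter_filter disjoint_compl_right), ← filter_union,
    union_compl]

theorem Equiv.Perm.eq_of_eqOn_of_strictMonoOn_compl [Finite α] {ρ σ : Equiv.Perm α} {s : Set α}
    (heq : s.EqOn ρ σ) (hρ : StrictMonoOn ρ sᶜ) (hσ : StrictMonoOn σ sᶜ) : ρ = σ := by
  have hrange : Set.range (sᶜ.domRestrict ρ) = Set.range (sᶜ.domRestrict σ) := by
    rw [Set.range_domRestrict, Set.range_domRestrict, Set.image_compl_eq ρ.bijective,
      Set.image_compl_eq σ.bijective, heq.image_eq]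
  have hcompl := (hρ.domRestrict.range_inj hσ.domRestrict).1 hrange
  ext x
  by_cases hx : x ∈ s
  · rw [heq hx]
  · exact congrFun hcompl ⟨x, hx⟩

theorem Equiv.Perm.exists_eqOn_strictMonoOn_compl [Fintype α] (s : Finset α) {v : α → α}
    (hv : Set.InjOn v s) : ∃ ρ : Equiv.Perm α, Set.EqOn ρ v s ∧ StrictMonoOn ρ ↑sᶜ := by
  have hcard : #(s.image v)ᶜ = #sᶜ := by
    rw [card_compl, card_compl, card_image_of_injOn hv]
  let e : {x // x ∈ sᶜ} ≃o {x // x ∈ (s.image v)ᶜ} :=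
    (sᶜ.orderIsoOfFin rfl).symm.trans ((s.image v)ᶜ.orderIsoOfFin hcard)
  let g : α → α := fun x => if hx : x ∈ s then v x else e ⟨x, mem_compl.2 hx⟩
  have hg : g.Injective := by
    intro x y hxy
    by_cases hx : x ∈ s <;> by_cases hy : y ∈ s <;> simp only [g, hx, hy, dif_pos] at hxy
    · exact hv hx hy hxy
    · exact absurd (hxy ▸ mem_image_of_mem v hx) (mem_compl.1 (e _).2)
    · exact absurd (hxy ▸ mem_image_of_mem v hy) (mem_compl.1 (e _).2)
    · exact congrArg Subtype.val (e.injective (Subtype.ext hxy))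
  refine ⟨Equiv.ofBijective g hg.bijective_of_finite, fun x hx => dif_pos hx, ?_⟩
  intro x hx y hy hxy
  simp only [coe_compl, Set.mem_compl_iff, mem_coe] at hx hy
  simp only [Equiv.ofBijective_apply, g, dif_neg hx, dif_neg hy]
  exact e.strictMono (Subtype.mk_lt_mk.2 hxy)

end General

section Counting

variable {n : ℕ}

theorem Equiv.Perm.card_filter_apply_lt (ρ : Equiv.Perm (Fin n)) (x : Fin n) :
    #{k | ρ k < x} = x := by
  rw [← Fin.card_Iio x]
  exact card_equiv ρ (by simp)

theorem Equiv.Perm.card_compl_filter_apply_lt_add {ρ : Equiv.Perm (Fin n)} {s : Finset (Fin n)}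
    (hρ : StrictMonoOn ρ s) {m : Fin n} (hm : m ∈ s) :
    #{k ∈ sᶜ | ρ k < ρ m} + m = #{k ∈ sᶜ | k < m} + ρ m := by
  have hs : #{k ∈ s | ρ k < ρ m} = #{k ∈ s | k < m} :=
    congrArg card (filter_congr fun k hk => hρ.lt_iff_lt hk hm)
  have hvalues := card_filter_add_card_compl_filter s (fun k => ρ k < ρ m)
  have hpositions := card_filter_add_card_compl_filter s (· < m)
  rw [ρ.card_filter_apply_lt] at hvalues
  rw [filter_gt_eq_Iio, Fin.card_Iio] at hpositions
  omega

theorem card_filter_lt_and_of_val_eq_succ {i j : Fin n} (hij : (j : ℕ) = i + 1)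
    {P : Fin n → Prop} [DecidablePred P] (hj : P j) :
    #{k | i < k ∧ P k} = #{k | j < k ∧ P k} + 1 := by
  rw [← card_insert_of_notMem (s := {k | j < k ∧ P k}) (a := j) (by simp)]
  congr 1
  ext k
  simp only [mem_filter, mem_univ, true_and, mem_insert, Fin.lt_def, Fin.ext_iff]
  constructor
  · rintro ⟨hik, hk⟩
    by_cases hkj : (k : ℕ) = j
    · exact Or.inl hkj
    · exact Or.inr ⟨by omega, hk⟩
  · rintro (hkj | ⟨hjk, hk⟩)
    · exact ⟨by omega, Fin.ext hkj ▸ hj⟩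
    · exact ⟨by omega, hk⟩

theorem card_filter_lt_of_val_eq_succ (t : Finset (Fin n)) {i j : Fin n}
    (hij : (j : ℕ) = i + 1) :
    #{k ∈ t | k < j} = #{k ∈ t | k < i} + if i ∈ t then 1 else 0 := by
  split_ifs with hi
  · rw [← card_insert_of_notMem (s := {k ∈ t | k < i}) (a := i) (by simp)]
    congr 1
    ext k
    simp only [mem_filter, mem_insert, Fin.lt_def, Fin.ext_iff]
    constructor
    · rintro ⟨hk, hkj⟩
      by_cases hki : (k : ℕ) = i
      · exact Or.inl hki
      · exact Or.inr ⟨hk, by omega⟩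
    · rintro (hki | ⟨hk, hki⟩)
      · exact ⟨Fin.ext hki ▸ hi, by omega⟩
      · exact ⟨hk, by omega⟩
  · congr 1
    ext k
    simp only [mem_filter, Fin.lt_def]
    constructor
    · rintro ⟨hk, hkj⟩
      exact ⟨hk, lt_of_le_of_ne (by omega) fun hki => hi (Fin.ext hki ▸ hk)⟩
    · rintro ⟨hk, hki⟩
      exact ⟨hk, by omega⟩

end Counting

section LRMax

variable {n : ℕ} {ρ : Equiv.Perm (Fin n)}

theorem isLastLRMaxBefore_of_forall_le {m i : Fin n} (hmi : m < i)
    (hm : ∀ j < i, ρ j ≤ ρ m) : IsLastLRMaxBefore ρ m i :=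
  ⟨hmi, fun j hj => (hm j (hj.trans hmi)).lt_of_ne (ρ.injective.ne hj.ne),
    fun p hmp hpi hp => (hp m hmp).not_ge (hm p hpi)⟩

theorem IsLastLRMaxBefore.unique {m m' i : Fin n} (h : IsLastLRMaxBefore ρ m i)
    (h' : IsLastLRMaxBefore ρ m' i) : m = m' := by
  by_contra hne
  rcases lt_or_gt_of_ne hne with hlt | hlt
  · exact h.2.2 m' hlt h'.1 h'.2.1
  · exact h'.2.2 m hlt h.1 h.2.1

theorem exists_isLastLRMaxBefore_forall_le {i j : Fin n} (hj : j < i) :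
    ∃ m, IsLastLRMaxBefore ρ m i ∧ ∀ k < i, ρ k ≤ ρ m := by
  obtain ⟨m, hm, hmax⟩ := (Iio i).exists_max_image ρ ⟨j, mem_Iio.2 hj⟩
  have hmax' : ∀ k < i, ρ k ≤ ρ m := fun k hk => hmax k (mem_Iio.2 hk)
  exact ⟨m, isLastLRMaxBefore_of_forall_le (mem_Iio.1 hm) hmax', hmax'⟩

theorem IsLastLRMaxBefore.apply_le {m i j : Fin n} (h : IsLastLRMaxBefore ρ m i) (hj : j < i) :
    ρ j ≤ ρ m := by
  obtain ⟨m', hm', hmax⟩ := exists_isLastLRMaxBefore_forall_le (ρ := ρ) hj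
  exact h.unique hm' ▸ hmax j hj

theorem IsLastLRMaxBefore.apply_lt {m i : Fin n} (h : IsLastLRMaxBefore ρ m i)
    (hi : ¬IsLRMax ρ i) : ρ i < ρ m := by
  obtain ⟨j, hji, hij⟩ : ∃ j < i, ρ i ≤ ρ j := by simpa [IsLRMax] using hi
  exact (hij.trans (h.apply_le hji)).lt_of_ne (ρ.injective.ne h.1.ne')

theorem exists_isLastLRMaxBefore_of_not_isLRMax {i : Fin n} (hi : ¬IsLRMax ρ i) :
    ∃ m, IsLastLRMaxBefore ρ m i := by
  obtain ⟨j, hji, -⟩ : ∃ j < i, ρ i ≤ ρ j := by simpa [IsLRMax] using hi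
  obtain ⟨m, hm, -⟩ := exists_isLastLRMaxBefore_forall_le (ρ := ρ) hji
  exact ⟨m, hm⟩

theorem height321_of_isLastLRMaxBefore {m i : Fin n} (hi : ¬IsLRMax ρ i)
    (hm : IsLastLRMaxBefore ρ m i) :
    height321 ρ i = #{k | i < k ∧ ρ i < ρ k ∧ ρ k < ρ m} := by
  rw [height321, if_neg hi]
  congr 1
  ext k
  simp only [mem_filter, mem_univ, true_and]
  exact ⟨fun ⟨h₁, h₂, m', hm', h₃⟩ => ⟨h₁, h₂, hm'.unique hm ▸ h₃⟩,
    fun ⟨h₁, h₂, h₃⟩ => ⟨h₁, h₂, m, hm, h₃⟩⟩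

theorem val_apply_eq_add_height321 {i : Fin n} (hi : IsLRMax ρ i) :
    (ρ i : ℕ) = i + height321 ρ i := by
  rw [height321, if_pos hi, ← ρ.card_filter_apply_lt (ρ i), ← Fin.card_Iio i,
    ← card_union_of_disjoint (disjoint_left.2 fun k hk hk' => ?_)]
  · congr 1
    ext k
    simp only [mem_filter, mem_univ, true_and, mem_union, mem_Iio]
    refine ⟨fun hk => ?_, fun hk => hk.elim (hi k) And.right⟩
    rcases lt_trichotomy k i with hki | rfl | hik
    · exact Or.inl hki
    · exact absurd hk (lt_irrefl _)
    · exact Or.inr ⟨hik, hk⟩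
  · exact lt_asymm (mem_Iio.1 hk) (mem_filter.1 hk').2.1

theorem height321_eq_zero_of_val_add_one_eq {i : Fin n} (hi : (i : ℕ) + 1 = n) :
    height321 ρ i = 0 := by
  have hlast : ∀ k, ¬i < k := fun k hk => by have := Fin.lt_def.1 hk; omega
  rw [height321]
  split_ifs <;> simp [hlast]

theorem height321_le_of_isLRMax {i j : Fin n} (hij : (j : ℕ) = i + 1) (hj : IsLRMax ρ j) :
    height321 ρ i ≤ height321 ρ j := by
  have hij' : i < j := Fin.lt_def.2 (by omega)
  have hlt : ∀ k, i < k → ρ k < ρ j → j < k := fun k hik hkj => by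
    have hk : k ≠ j := fun h => (h ▸ hkj).false
    rw [Fin.lt_def] at hik ⊢
    exact lt_of_le_of_ne (by omega) (Fin.val_injective.ne hk.symm)
  rw [show height321 ρ j = #{k | j < k ∧ ρ k < ρ j} by rw [height321, if_pos hj]]
  by_cases hi : IsLRMax ρ i
  · rw [height321, if_pos hi]
    refine card_le_card fun k hk => ?_
    simp only [mem_filter, mem_univ, true_and] at hk ⊢
    have hkj := hk.2.trans (hj i hij')
    exact ⟨hlt k hk.1 hkj, hkj⟩
  · obtain ⟨m, hm⟩ := exists_isLastLRMaxBefore_of_not_isLRMax hi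
    rw [height321_of_isLastLRMaxBefore hi hm]
    refine card_le_card fun k hk => ?_
    simp only [mem_filter, mem_univ, true_and] at hk ⊢
    have hkj := hk.2.2.trans (hj m (hm.1.trans hij'))
    exact ⟨hlt k hk.1 hkj, hkj⟩

end LRMax

/-- Position `0`, which has no predecessor, is always a weak ascent. -/
def weakAscents {n : ℕ} (h : Fin n → ℕ) : Finset (Fin n) :=
  {j | ∀ i : Fin n, (j : ℕ) = i + 1 → h i ≤ h j}

def StepBounded {n : ℕ} (h : Fin n → ℕ) : Prop :=
  ∀ i j : Fin n, (j : ℕ) = i + 1 → h i ≤ h j + 1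

namespace Avoids321

variable {n : ℕ} {ρ : Equiv.Perm (Fin n)}

theorem apply_lt_of_apply_lt (hρ : Avoids321 ⇑ρ) {m j k : Fin n} (hmj : m < j) (hjk : j < k)
    (hjm : ρ j < ρ m) : ρ j < ρ k :=
  (not_lt.1 fun hkj => hρ m j k hmj hjk ⟨hkj, hjm⟩).lt_of_ne (ρ.injective.ne hjk.ne)

theorem strictMonoOn_not_isLRMax (hρ : Avoids321 ⇑ρ) :
    StrictMonoOn ρ {i | ¬IsLRMax ρ i} := by
  intro i hi j _ hij
  obtain ⟨m, hm⟩ := exists_isLastLRMaxBefore_of_not_isLRMax hi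
  exact hρ.apply_lt_of_apply_lt hm.1 hij (hm.apply_lt hi)

theorem height321_eq_add_one (hρ : Avoids321 ⇑ρ) {i j : Fin n} (hij : (j : ℕ) = i + 1)
    (hj : ¬IsLRMax ρ j) : height321 ρ i = height321 ρ j + 1 := by
  have hlt : i < j := Fin.lt_def.2 (by omega)
  by_cases hi : IsLRMax ρ i
  · have hm : IsLastLRMaxBefore ρ i j :=
      ⟨hlt, hi, fun p hip hpj => by rw [Fin.lt_def] at hip hpj; omega⟩
    have hji := hm.apply_lt hj
    rw [height321_of_isLastLRMaxBefore hj hm, height321, if_pos hi,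
      card_filter_lt_and_of_val_eq_succ hij hji]
    congr 2
    ext k
    simp only [mem_filter, mem_univ, true_and, and_congr_right_iff]
    exact fun hjk => ⟨fun hki => ⟨hρ.apply_lt_of_apply_lt hlt hjk hji, hki⟩, And.right⟩
  · obtain ⟨m, hm⟩ := exists_isLastLRMaxBefore_of_not_isLRMax hi
    have hm' : IsLastLRMaxBefore ρ m j := by
      refine ⟨hm.1.trans hlt, hm.2.1, fun p hmp hpj hp => ?_⟩
      rcases eq_or_ne p i with rfl | hpi
      · exact hi hp
      · have hpi' := Fin.val_injective.ne hpi
        rw [Fin.lt_def] at hpj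
        exact hm.2.2 p hmp (Fin.lt_def.2 (by omega)) hp
    have hjm := hm'.apply_lt hj
    have hij' : ρ i < ρ j := hρ.apply_lt_of_apply_lt hm.1 hlt (hm.apply_lt hi)
    rw [height321_of_isLastLRMaxBefore hi hm, height321_of_isLastLRMaxBefore hj hm',
      card_filter_lt_and_of_val_eq_succ hij ⟨hij', hjm⟩]
    congr 2
    ext k
    simp only [mem_filter, mem_univ, true_and, and_congr_right_iff]
    exact fun hjk => ⟨fun hk => ⟨hρ.apply_lt_of_apply_lt hm'.1 hjk hjm, hk.2⟩,
      fun hk => ⟨hij'.trans hk.1, hk.2⟩⟩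

theorem stepBounded_height321 (hρ : Avoids321 ⇑ρ) : StepBounded (height321 ρ) := by
  intro i j hij
  by_cases hj : IsLRMax ρ j
  · exact (height321_le_of_isLRMax hij hj).trans (Nat.le_succ _)
  · exact (hρ.height321_eq_add_one hij hj).le

theorem isLRMax_iff_mem_weakAscents (hρ : Avoids321 ⇑ρ) {j : Fin n} :
    IsLRMax ρ j ↔ j ∈ weakAscents (height321 ρ) := by
  simp only [weakAscents, mem_filter, mem_univ, true_and]
  refine ⟨fun hj i hij => height321_le_of_isLRMax hij hj, fun hj => by_contra fun hnj => ?_⟩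
  obtain ⟨m, hm⟩ := exists_isLastLRMaxBefore_of_not_isLRMax hnj
  have hpos := Fin.lt_def.1 hm.1
  have := hρ.height321_eq_add_one (i := ⟨j - 1, by omega⟩) (by simp; omega) hnj
  have := hj ⟨j - 1, by omega⟩ (by simp; omega)
  omega

theorem eq_of_height321_eq {σ : Equiv.Perm (Fin n)} (hρ : Avoids321 ⇑ρ) (hσ : Avoids321 ⇑σ)
    (h : ∀ i, height321 ρ i = height321 σ i) : ρ = σ := by
  have hmax : ∀ i, IsLRMax ρ i ↔ IsLRMax σ i := fun i => by
    rw [hρ.isLRMax_iff_mem_weakAscents, hσ.isLRMax_iff_mem_weakAscents, funext h]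
  refine Equiv.Perm.eq_of_eqOn_of_strictMonoOn_compl (s := {i | IsLRMax ρ i}) (fun i hi => ?_)
    hρ.strictMonoOn_not_isLRMax
    (by simpa only [Set.compl_ofPred, hmax] using hσ.strictMonoOn_not_isLRMax)
  exact Fin.ext (by rw [val_apply_eq_add_height321 hi,
    val_apply_eq_add_height321 ((hmax i).1 hi), h])

end Avoids321

namespace StepBounded

variable {n : ℕ} {h : Fin n → ℕ}

theorem val_add_le (hh : StepBounded h) {i j : Fin n} (hij : i ≤ j) :
    (i : ℕ) + h i ≤ j + h j := by
  induction j using WellFoundedLT.induction with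
  | _ j ih =>
    rcases hij.eq_or_lt with rfl | hlt
    · rfl
    · have hj := Fin.lt_def.1 hlt
      have hp := ih ⟨j - 1, by omega⟩ (Fin.lt_def.2 (by simp; omega))
        (Fin.le_def.2 (by simp; omega))
      have hstep := hh ⟨j - 1, by omega⟩ j (by simp; omega)
      simp only at hp hstep
      omega

theorem val_add_lt (hh : StepBounded h) {l : Fin n} (hl : (l : ℕ) + 1 = n) (h0 : h l = 0)
    (i : Fin n) : (i : ℕ) + h i < n := by
  have := hh.val_add_le (Fin.le_def.2 (by omega) : i ≤ l)
  omega

theorem val_add_lt_val_add (hh : StepBounded h) {i j : Fin n} (hij : i < j)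
    (hj : j ∈ weakAscents h) : (i : ℕ) + h i < j + h j := by
  have hij' := Fin.lt_def.1 hij
  simp only [weakAscents, mem_filter, mem_univ, true_and] at hj
  have hp := hh.val_add_le (Fin.le_def.2 (by simp; omega) : i ≤ ⟨j - 1, by omega⟩)
  have hpj := hj ⟨j - 1, by omega⟩ (by simp; omega)
  simp only at hp hpj
  omega

theorem exists_eq_add_one_of_notMem (hh : StepBounded h) {j : Fin n}
    (hj : j ∉ weakAscents h) : ∃ i : Fin n, (j : ℕ) = i + 1 ∧ h i = h j + 1 := by
  simp only [weakAscents, mem_filter, mem_univ, true_and, not_forall, not_le] at hj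
  obtain ⟨i, hij, hi⟩ := hj
  exact ⟨i, hij, le_antisymm (hh i j hij) hi⟩

theorem eq_of_weakAscents_eq {g : Fin n → ℕ} (hg : StepBounded g) (hh : StepBounded h)
    (hS : weakAscents g = weakAscents h) (heq : ∀ i ∈ weakAscents h, g i = h i) : g = h := by
  funext j
  induction j using WellFoundedLT.induction with
  | _ j ih =>
    by_cases hj : j ∈ weakAscents h
    · exact heq j hj
    · obtain ⟨i, hij, hi⟩ := hh.exists_eq_add_one_of_notMem hj
      obtain ⟨i', hij', hi'⟩ := hg.exists_eq_add_one_of_notMem (hS ▸ hj)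
      rw [show i' = i from Fin.ext (by omega)] at hi'
      have := ih i (Fin.lt_def.2 (by omega))
      omega

/-- Along a run of descents `#{k ∈ (weakAscents h)ᶜ | k < i} + h i` does not increase, and it
drops at the first descent after a weak ascent. -/
theorem exists_mem_weakAscents_card_add_lt (hh : StepBounded h) {i : Fin n}
    (hi : i ∉ weakAscents h) : ∃ m ∈ weakAscents h, m < i ∧
      #{k ∈ (weakAscents h)ᶜ | k < i} + h i < #{k ∈ (weakAscents h)ᶜ | k < m} + h m := by
  induction i using WellFoundedLT.induction with
  | _ i ih =>
    obtain ⟨j, hij, hj⟩ := hh.exists_eq_add_one_of_notMem hi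
    have hji : j < i := Fin.lt_def.2 (by omega)
    have hr := card_filter_lt_of_val_eq_succ (weakAscents h)ᶜ hij
    by_cases hjS : j ∈ weakAscents h
    · refine ⟨j, hjS, hji, ?_⟩
      rw [hr, if_neg (notMem_compl.2 hjS)]
      omega
    · obtain ⟨m, hm, hmj, hlt⟩ := ih j hji hjS
      refine ⟨m, hm, hmj.trans hji, ?_⟩
      rw [hr, if_pos (mem_compl.2 hjS)]
      omega

theorem isLRMax_iff_mem_weakAscents {ρ : Equiv.Perm (Fin n)} (hh : StepBounded h)
    (hρS : StrictMonoOn ρ (weakAscents h)) (hρT : StrictMonoOn ρ ↑(weakAscents h)ᶜ)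
    (hρ : ∀ i ∈ weakAscents h, (ρ i : ℕ) = i + h i) (j : Fin n) :
    IsLRMax ρ j ↔ j ∈ weakAscents h := by
  have hcount : ∀ m ∈ weakAscents h,
      #{k ∈ (weakAscents h)ᶜ | ρ k < ρ m} = #{k ∈ (weakAscents h)ᶜ | k < m} + h m :=
    fun m hm => by
      have := Equiv.Perm.card_compl_filter_apply_lt_add hρS hm
      rw [hρ m hm] at this
      omega
  constructor
  · intro hj
    by_contra hjS
    obtain ⟨m, hm, hmj, hlt⟩ := hh.exists_mem_weakAscents_card_add_lt hjS
    have hjm : ρ j < ρ m :=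
      (hρT.lt_iff_card_filter_lt (mem_compl.2 hjS) _).2 (by rw [hcount m hm]; omega)
    exact lt_asymm hjm (hj m hmj)
  · intro hj i hij
    by_cases hiS : i ∈ weakAscents h
    · exact hρS hiS hj hij
    · rw [hρT.lt_iff_card_filter_lt (mem_compl.2 hiS), hcount j hj]
      have := (strictMonoOn_id.lt_iff_card_filter_lt (t := (weakAscents h)ᶜ)
        (mem_compl.2 hiS) j).1 hij
      simp only [id] at this
      omega

theorem exists_avoids321_height321_eq (hh : StepBounded h) {l : Fin n} (hl : (l : ℕ) + 1 = n)
    (h0 : h l = 0) : ∃ ρ : Equiv.Perm (Fin n), Avoids321 ⇑ρ ∧ height321 ρ = h := by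
  let v : Fin n → Fin n := fun i => ⟨i + h i, hh.val_add_lt hl h0 i⟩
  have hv : StrictMonoOn v (weakAscents h) := fun i _ j hj hij =>
    Fin.lt_def.2 (hh.val_add_lt_val_add hij hj)
  obtain ⟨ρ, hρv, hρT⟩ := Equiv.Perm.exists_eqOn_strictMonoOn_compl (weakAscents h) hv.injOn
  have hρS : StrictMonoOn ρ (weakAscents h) := hv.congr hρv.symm
  have hρ : Avoids321 ⇑ρ := avoids321_of_strictMonoOn_compl hρS (by rwa [← coe_compl])
  have hmax := hh.isLRMax_iff_mem_weakAscents hρS hρT fun i hi => congrArg Fin.val (hρv hi)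
  refine ⟨ρ, hρ, hρ.stepBounded_height321.eq_of_weakAscents_eq hh
    (Finset.ext fun j => by rw [← hρ.isLRMax_iff_mem_weakAscents, hmax]) fun i hi => ?_⟩
  have := val_apply_eq_add_height321 ((hmax i).2 hi)
  rw [hρv hi] at this
  simp only [v] at this
  omega

end StepBounded

/-- For `n ≥ 1`, the 321-height-vector map is a bijection from the set of
(3,2,1)-avoiding permutations of {1,…,n} onto the set `H_n` of sequences
`(h_1,…,h_n)` of nonnegative integers with `h_n = 0` and `h_i ≤ h_{i+1} + 1`. -/
theorem height321_bijOn_avoiding (n : ℕ) (hn : 1 ≤ n) :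
    Set.BijOn (fun (ρ : Equiv.Perm (Fin n)) => fun i : Fin n => height321 ρ i)
      {ρ | ∀ a b c : Fin n, a < b → b < c → ¬(ρ c < ρ b ∧ ρ b < ρ a)}
      {h : Fin n → ℕ | h ⟨n - 1, by omega⟩ = 0 ∧
        ∀ i : ℕ, ∀ hi : i + 1 < n, h ⟨i, by omega⟩ ≤ h ⟨i + 1, hi⟩ + 1} := by
  refine ⟨fun ρ hρ => ?_, fun ρ hρ σ hσ hρσ => ?_, fun h ⟨h0, hstep⟩ => ?_⟩
  · exact ⟨height321_eq_zero_of_val_add_one_eq (by simp; omega),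
      fun i hi => Avoids321.stepBounded_height321 hρ _ _ rfl⟩
  · exact Avoids321.eq_of_height321_eq hρ hσ (congrFun hρσ)
  · have hh : StepBounded h := by
      rintro ⟨i, hi⟩ ⟨j, hj⟩ (rfl : j = i + 1)
      exact hstep i hj
    exact hh.exists_avoids321_height321_eq (l := ⟨n - 1, by omega⟩) (by simp; omega) h0
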